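/- arXiv:2204.01406 — 6 statements merged into one kernel-verified Lean document; each statement's English description precedes it below -/
import Mathlib

section
/- Let s > 0, t > 0, 0 ≤ r < s, and let μ be a finite positive Borel measure on [0,1) that is an s-Carleson measure (i.e., μ([x,1)) ≤ C(1-x)^s for all x). Then sup over a in the unit disk of ∫_{[0,1)} (1-|a|)^t / ((1-x)^r (1-|a|x)^{s+t-r}) dμ(x) is finite. -/
open MeasureTheory Set
open scoped ENNReal

/-!
Split `[0, 1)` into the dyadic layers `2⁻¹ ^ (n + 1) < 1 - x ≤ 2⁻¹ ^ n` and put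
`u = 2⁻¹ ^ (n + 1)`, `ε = 1 - ‖a‖`. Since `1 - ‖a‖ x ≥ max ε u`, the integrand is at most
`ε ^ t / (u ^ r * max ε u ^ (s + t - r))` on the `n`-th layer, and the Carleson condition
bounds the mass of the layer by `C (2u) ^ s`. The product is at most
`C 2 ^ s min ((u/ε) ^ (s-r), (ε/u) ^ t)`, so summing over `n` gives two geometric series, with
ratios `2 ^ (r - s)` and `2 ^ (-t)`, on either side of the scale `u ≈ ε`; their sum does not
depend on `ε`.
-/

theorem setLIntegral_le_tsum_mul_measure {α : Type*} [MeasurableSpace α] (μ : Measure α)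
    {A : Set α} {S : ℕ → Set α} (hS : ∀ n, MeasurableSet (S n)) {f : α → ℝ≥0∞}
    {b : ℕ → ℝ≥0∞} (hf : ∀ x ∈ A, ∃ n, x ∈ S n ∧ f x ≤ b n) :
    ∫⁻ x in A, f x ∂μ ≤ ∑' n, b n * μ (S n) := by
  have hcover : ∀ x ∈ A, f x ≤ ∑' n, (S n).indicator (fun _ ↦ b n) x := by
    intro x hx
    obtain ⟨n, hxn, hfx⟩ := hf x hx
    calc f x ≤ (S n).indicator (fun _ ↦ b n) x := by rwa [indicator_of_mem hxn]
      _ ≤ _ := ENNReal.le_tsum n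
  calc ∫⁻ x in A, f x ∂μ ≤ ∫⁻ x in A, ∑' n, (S n).indicator (fun _ ↦ b n) x ∂μ :=
        setLIntegral_mono (.tsum fun n ↦ measurable_const.indicator (hS n)) hcover
    _ ≤ ∫⁻ x, ∑' n, (S n).indicator (fun _ ↦ b n) x ∂μ := setLIntegral_le_lintegral _ _
    _ = ∑' n, b n * μ (S n) := by
        rw [lintegral_tsum fun n ↦ (measurable_const.indicator (hS n)).aemeasurable]
        exact tsum_congr fun n ↦ lintegral_indicator_const (hS n) _

theorem exists_mem_Ico_one_sub_inv_two_pow {x : ℝ} (hx : x ∈ Ico (0 : ℝ) 1) :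
    ∃ n : ℕ, x ∈ Ico (1 - 2⁻¹ ^ n) 1 ∧ 2⁻¹ ^ (n + 1) ≤ 1 - x := by
  obtain ⟨n, hlt, hle⟩ := exists_nat_pow_near_of_lt_one (sub_pos.2 hx.2) (by linarith [hx.1])
    (by norm_num : (0 : ℝ) < 2⁻¹) (by norm_num)
  exact ⟨n, ⟨by linarith, hx.2⟩, hlt.le⟩

theorem measure_Ico_one_sub_inv_two_pow_le {μ : Measure ℝ} {C s : ℝ} (hC : 0 ≤ C)
    (hCar : ∀ x ∈ Ico (0 : ℝ) 1, μ (Ico x 1) ≤ ENNReal.ofReal (C * (1 - x) ^ s)) (n : ℕ) :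
    μ (Ico (1 - 2⁻¹ ^ n) 1)
      ≤ ENNReal.ofReal (C * 2 ^ s) * ENNReal.ofReal ((2⁻¹ ^ (n + 1)) ^ s) := by
  have hmem : 1 - 2⁻¹ ^ n ∈ Ico (0 : ℝ) 1 :=
    ⟨sub_nonneg.2 (pow_le_one₀ (by norm_num) (by norm_num)), sub_lt_self 1 (by positivity)⟩
  rw [← ENNReal.ofReal_mul (by positivity), mul_assoc, ← Real.mul_rpow (by norm_num)
    (by positivity), pow_succ', mul_inv_cancel_left₀ (by norm_num)]
  simpa using hCar _ hmem

theorem ENNReal.tsum_le_of_geometric_both_sides {T : ℕ → ℝ≥0∞} {q₁ q₂ : ℝ≥0∞} (N : ℕ)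
    (hlow : ∀ n < N, T n ≤ q₁ ^ (N - 1 - n)) (hhigh : ∀ k, T (k + N) ≤ q₂ ^ k) :
    ∑' n, T n ≤ (1 - q₁)⁻¹ + (1 - q₂)⁻¹ := by
  rw [← ENNReal.summable.sum_add_tsum_nat_add' (k := N), ← ENNReal.tsum_geometric q₁,
    ← ENNReal.tsum_geometric q₂]
  refine add_le_add ?_ (ENNReal.tsum_le_tsum hhigh)
  calc ∑ n ∈ Finset.range N, T n ≤ ∑ n ∈ Finset.range N, q₁ ^ (N - 1 - n) :=
        Finset.sum_le_sum fun n hn ↦ hlow n (Finset.mem_range.mp hn)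
    _ = ∑ n ∈ Finset.range N, q₁ ^ n := Finset.sum_range_reflect (q₁ ^ ·) N
    _ ≤ ∑' n, q₁ ^ n := ENNReal.sum_le_tsum _

theorem tsum_ofReal_min_rpow_dyadic_le {ε α β : ℝ} (hε : 0 < ε) (hε₁ : ε ≤ 1) (hα : 0 ≤ α)
    (hβ : 0 ≤ β) :
    ∑' n : ℕ, ENNReal.ofReal (min ((2⁻¹ ^ (n + 1) / ε) ^ α) ((ε / 2⁻¹ ^ (n + 1)) ^ β))
      ≤ (1 - ENNReal.ofReal (2⁻¹ ^ β))⁻¹ + (1 - ENNReal.ofReal (2⁻¹ ^ α))⁻¹ := by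
  obtain ⟨N, hNε, hεN⟩ :=
    exists_nat_pow_near_of_lt_one hε hε₁ (by norm_num : (0 : ℝ) < 2⁻¹) (by norm_num)
  refine ENNReal.tsum_le_of_geometric_both_sides N (fun n hn ↦ ?_) (fun k ↦ ?_)
  · rw [← ENNReal.ofReal_pow (by positivity), Real.rpow_pow_comm (by norm_num : (0 : ℝ) ≤ 2⁻¹)]
    refine ENNReal.ofReal_le_ofReal
      ((min_le_right _ _).trans (Real.rpow_le_rpow (by positivity) ?_ hβ))
    rw [div_le_iff₀ (by positivity), ← pow_add]
    convert hεN using 2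
    omega
  · rw [← ENNReal.ofReal_pow (by positivity), Real.rpow_pow_comm (by norm_num : (0 : ℝ) ≤ 2⁻¹)]
    refine ENNReal.ofReal_le_ofReal
      ((min_le_left _ _).trans (Real.rpow_le_rpow (by positivity) ?_ hα))
    rw [div_le_iff₀ hε, add_assoc, pow_add]
    exact mul_le_mul_of_nonneg_left hNε.le (by positivity)

theorem kernel_le_of_le_one_sub {ρ x u s t r : ℝ} (hρ : ρ ∈ Ico (0 : ℝ) 1)
    (hx : x ∈ Ico (0 : ℝ) 1) (hu : 0 < u) (hux : u ≤ 1 - x) (hr : 0 ≤ r) (hrst : r ≤ s + t) :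
    (1 - ρ) ^ t / ((1 - x) ^ r * (1 - ρ * x) ^ (s + t - r))
      ≤ (1 - ρ) ^ t / (u ^ r * max (1 - ρ) u ^ (s + t - r)) := by
  obtain ⟨hρ₀, hρ₁⟩ := hρ
  obtain ⟨hx₀, hx₁⟩ := hx
  have hmax : max (1 - ρ) u ≤ 1 - ρ * x := max_le (by nlinarith) (by nlinarith)
  gcongr

theorem kernel_mul_rpow_le_min {ε u s t r : ℝ} (hε : 0 < ε) (hu : 0 < u) (hrs : r ≤ s)
    (ht : 0 ≤ t) :
    ε ^ t / (u ^ r * max ε u ^ (s + t - r)) * u ^ s ≤ min ((u / ε) ^ (s - r)) ((ε / u) ^ t) := by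
  set M := max ε u
  have hM : 0 < M := lt_max_of_lt_left hε
  have hsr : 0 ≤ s - r := by linarith
  have hfactor : ε ^ t / (u ^ r * M ^ (s + t - r)) * u ^ s = (u / M) ^ (s - r) * (ε / M) ^ t := by
    rw [Real.div_rpow hu.le hM.le, Real.div_rpow hε.le hM.le,
      show s + t - r = (s - r) + t by ring, Real.rpow_add hM,
      show s = (s - r) + r by ring, Real.rpow_add hu, show s - r + r - r = s - r by ring]
    field_simp
  have huM : (u / M) ^ (s - r) ≤ 1 :=
    Real.rpow_le_one (by positivity) ((div_le_one hM).2 (le_max_right _ _)) hsr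
  have hεM : (ε / M) ^ t ≤ 1 :=
    Real.rpow_le_one (by positivity) ((div_le_one hM).2 (le_max_left _ _)) ht
  rw [hfactor]
  refine le_min ?_ ?_
  · calc (u / M) ^ (s - r) * (ε / M) ^ t ≤ (u / M) ^ (s - r) :=
          mul_le_of_le_one_right (by positivity) hεM
      _ ≤ (u / ε) ^ (s - r) := by gcongr; exact le_max_left _ _
  · calc (u / M) ^ (s - r) * (ε / M) ^ t ≤ (ε / M) ^ t :=
          mul_le_of_le_one_left (by positivity) huM
      _ ≤ (ε / u) ^ t := by gcongr; exact le_max_right _ _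

theorem stmt_1_general (s t r : ℝ) (ht : 0 < t) (hr0 : 0 ≤ r) (hrs : r < s)
    (μ : Measure ℝ) (C : ℝ) (hC : 0 < C)
    (hCar : ∀ x ∈ Ico (0:ℝ) 1, μ (Ico x 1) ≤ ENNReal.ofReal (C * (1 - x) ^ s)) :
    ∃ M : ℝ, ∀ a ∈ Metric.ball (0:ℂ) 1,
      (∫⁻ x in Ico (0:ℝ) 1,
        ENNReal.ofReal ((1 - ‖a‖) ^ t / ((1 - x) ^ r * (1 - ‖a‖ * x) ^ (s + t - r))) ∂μ)
        ≤ ENNReal.ofReal M := by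
  have hgeom : ∀ γ : ℝ, 0 < γ → (1 - ENNReal.ofReal (2⁻¹ ^ γ))⁻¹ ≠ ∞ := fun γ hγ ↦
    ENNReal.inv_ne_top.2 (tsub_pos_of_lt (ENNReal.ofReal_lt_one.2
      (Real.rpow_lt_one (by norm_num) (by norm_num) hγ))).ne'
  set B := ENNReal.ofReal (C * 2 ^ s) *
    ((1 - ENNReal.ofReal (2⁻¹ ^ t))⁻¹ + (1 - ENNReal.ofReal (2⁻¹ ^ (s - r)))⁻¹)
  refine ⟨B.toReal, fun a ha ↦ ?_⟩
  rw [ENNReal.ofReal_toReal (by finiteness [hgeom t ht, hgeom (s - r) (sub_pos.2 hrs)])]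
  have hρ : ‖a‖ ∈ Ico (0 : ℝ) 1 := ⟨norm_nonneg a, mem_ball_zero_iff.1 ha⟩
  set ε := 1 - ‖a‖
  have hε : 0 < ε := sub_pos.2 hρ.2
  set u : ℕ → ℝ := fun n ↦ 2⁻¹ ^ (n + 1)
  have hu : ∀ n, 0 < u n := fun n ↦ by positivity
  calc _ ≤ ∑' n, ENNReal.ofReal (ε ^ t / (u n ^ r * max ε (u n) ^ (s + t - r))) *
          μ (Ico (1 - 2⁻¹ ^ n) 1) := by
        refine setLIntegral_le_tsum_mul_measure μ (fun _ ↦ measurableSet_Ico) fun x hx ↦ ?_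
        obtain ⟨n, hxn, hun⟩ := exists_mem_Ico_one_sub_inv_two_pow hx
        exact ⟨n, hxn, ENNReal.ofReal_le_ofReal
          (kernel_le_of_le_one_sub hρ hx (hu n) hun hr0 (by linarith))⟩
    _ ≤ ∑' n, ENNReal.ofReal (C * 2 ^ s) *
          ENNReal.ofReal (min ((u n / ε) ^ (s - r)) ((ε / u n) ^ t)) := by
        refine ENNReal.tsum_le_tsum fun n ↦ ?_
        grw [measure_Ico_one_sub_inv_two_pow_le hC.le hCar n, mul_left_comm,
          ← ENNReal.ofReal_mul (by positivity), kernel_mul_rpow_le_min hε (hu n) hrs.le ht.le]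
    _ ≤ B := by
        rw [ENNReal.tsum_mul_left]
        grw [tsum_ofReal_min_rpow_dyadic_le hε (by linarith [hρ.1]) (sub_nonneg.2 hrs.le) ht.le]

theorem stmt_1 (s t r : ℝ) (hs : 0 < s) (ht : 0 < t) (hr0 : 0 ≤ r) (hrs : r < s)
    (μ : Measure ℝ) [IsFiniteMeasure μ] (C : ℝ) (hC : 0 < C)
    (hCar : ∀ x ∈ Ico (0:ℝ) 1, μ (Ico x 1) ≤ ENNReal.ofReal (C * (1 - x) ^ s)) :
    ∃ M : ℝ, ∀ a ∈ Metric.ball (0:ℂ) 1,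
      (∫⁻ x in Ico (0:ℝ) 1,
        ENNReal.ofReal ((1 - ‖a‖) ^ t / ((1 - x) ^ r * (1 - ‖a‖ * x) ^ (s + t - r))) ∂μ)
        ≤ ENNReal.ofReal M :=
  stmt_1_general s t r ht hr0 hrs μ C hC hCar
end

section
/- Let s > 0, t > 0, 0 ≤ r < s, and let μ be a finite positive Borel measure on [0,1). If sup over a ∈ 𝔻 of ∫_{[0,1)} (1-|a|)^t / ((1-x)^r |1-ax|^{s+t-r}) dμ(x) < ∞, then μ is an s-Carleson measure, i.e., μ([x,1)) ≤ C(1-x)^s for all x ∈ [0,1). -/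
/-! Test the hypothesis at the real point `a = b ∈ [0,1)`. For `b ≤ x < 1` we have `1 - x ≤ 1 - b`
and `1 - b x ≤ 1 - b² ≤ 2 (1 - b)`, so on `[b,1)` the integrand is at least
`(1 - b)^t / ((1 - b)^r (2 (1 - b))^(s+t-r)) = 2^(r-s-t) (1 - b)^(-s)`. Integrating this lower
bound over `[b,1)` gives `μ [b,1) ≤ 2^(s+t-r) M (1 - b)^s`. -/

open MeasureTheory Set

lemma Complex.norm_one_sub_ofReal_mul_ofReal {b x : ℝ} (h : b * x ≤ 1) :
    ‖1 - (b : ℂ) * x‖ = 1 - b * x := by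
  rw [← Complex.ofReal_mul, ← Complex.ofReal_one, ← Complex.ofReal_sub,
    Complex.norm_of_nonneg (by linarith)]

lemma one_le_two_rpow_mul_rpow_mul_kernel {s t r b x : ℝ} (hr : 0 ≤ r) (he : 0 ≤ s + t - r)
    (hb : 0 ≤ b) (hbx : b ≤ x) (hx : x < 1) :
    1 ≤ 2 ^ (s + t - r) * (1 - b) ^ s * ((1 - b) ^ t / ((1 - x) ^ r * (1 - b * x) ^ (s + t - r))) := by
  have hb1 : 0 < 1 - b := by linarith
  have hbx1 : 0 < 1 - b * x := by nlinarith
  have hD : 0 < (1 - x) ^ r * (1 - b * x) ^ (s + t - r) := by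
    have : 0 < 1 - x := by linarith
    positivity
  rw [mul_div_assoc', one_le_div hD]
  calc (1 - x) ^ r * (1 - b * x) ^ (s + t - r)
      ≤ (1 - b) ^ r * (2 * (1 - b)) ^ (s + t - r) := by
        gcongr
        nlinarith
    _ = 2 ^ (s + t - r) * (1 - b) ^ (r + (s + t - r)) := by
        rw [Real.mul_rpow zero_le_two hb1.le, Real.rpow_add hb1]; ring
    _ = 2 ^ (s + t - r) * (1 - b) ^ s * (1 - b) ^ t := by
        rw [show r + (s + t - r) = s + t by ring, Real.rpow_add hb1]; ring

lemma measure_le_ofReal_mul_of_one_le_mul {α : Type*} [MeasurableSpace α] {μ : Measure α}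
    {A B : Set α} (hA : MeasurableSet A) (hAB : A ⊆ B) {f : α → ℝ} {c M : ℝ} (hc : 0 ≤ c)
    (hf : ∀ x ∈ A, 1 ≤ c * f x) (hM : ∫⁻ x in B, ENNReal.ofReal (f x) ∂μ ≤ ENNReal.ofReal M) :
    μ A ≤ ENNReal.ofReal (c * M) :=
  calc μ A = ∫⁻ _ in A, 1 ∂μ := (setLIntegral_one A).symm
    _ ≤ ∫⁻ x in A, ENNReal.ofReal c * ENNReal.ofReal (f x) ∂μ :=
        setLIntegral_mono' hA fun x hx => by
          rw [← ENNReal.ofReal_mul hc, ← ENNReal.ofReal_one]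
          exact ENNReal.ofReal_le_ofReal (hf x hx)
    _ = ENNReal.ofReal c * ∫⁻ x in A, ENNReal.ofReal (f x) ∂μ :=
        lintegral_const_mul' _ _ ENNReal.ofReal_ne_top
    _ ≤ ENNReal.ofReal c * ENNReal.ofReal M := by
        gcongr
        exact (lintegral_mono_set hAB).trans hM
    _ = ENNReal.ofReal (c * M) := (ENNReal.ofReal_mul hc).symm

theorem stmt_2_general (s t r : ℝ) (ht : 0 < t) (hr0 : 0 ≤ r) (hrs : r < s)
    (μ : Measure ℝ) (M : ℝ)
    (hsup : ∀ a ∈ Metric.ball (0:ℂ) 1,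
      (∫⁻ x in Ico (0:ℝ) 1,
        ENNReal.ofReal ((1 - ‖a‖) ^ t /
          ((1 - x) ^ r * ‖1 - a * (x:ℂ)‖ ^ (s + t - r))) ∂μ)
        ≤ ENNReal.ofReal M) :
    ∃ C : ℝ, 0 < C ∧ ∀ x ∈ Ico (0:ℝ) 1, μ (Ico x 1) ≤ ENNReal.ofReal (C * (1 - x) ^ s) := by
  refine ⟨2 ^ (s + t - r) * max M 1, by positivity, fun b ⟨hb0, hb1⟩ => ?_⟩
  have hb1' : 0 ≤ 1 - b := by linarith
  have hnorm_b : ‖(b : ℂ)‖ = b := Complex.norm_of_nonneg hb0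
  have hb_ball : (b : ℂ) ∈ Metric.ball (0 : ℂ) 1 := by
    rwa [mem_ball_zero_iff, hnorm_b]
  have hμ := measure_le_ofReal_mul_of_one_le_mul (μ := μ) measurableSet_Ico
    (Ico_subset_Ico_left hb0) (c := 2 ^ (s + t - r) * (1 - b) ^ s)
    (by positivity)
    (fun x ⟨hbx, hx1⟩ => by
      rw [hnorm_b, Complex.norm_one_sub_ofReal_mul_ofReal (by nlinarith)]
      exact one_le_two_rpow_mul_rpow_mul_kernel hr0 (by linarith) hb0 hbx hx1)
    (hsup _ hb_ball)
  refine hμ.trans (ENNReal.ofReal_le_ofReal ?_)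
  have : 0 ≤ (1 - b) ^ s := Real.rpow_nonneg hb1' s
  calc 2 ^ (s + t - r) * (1 - b) ^ s * M ≤ 2 ^ (s + t - r) * (1 - b) ^ s * max M 1 := by
        gcongr; exact le_max_left _ _
    _ = 2 ^ (s + t - r) * max M 1 * (1 - b) ^ s := by ring

theorem stmt_2 (s t r : ℝ) (hs : 0 < s) (ht : 0 < t) (hr0 : 0 ≤ r) (hrs : r < s)
    (μ : Measure ℝ) [IsFiniteMeasure μ] (M : ℝ)
    (hsup : ∀ a ∈ Metric.ball (0:ℂ) 1,
      (∫⁻ x in Ico (0:ℝ) 1,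
        ENNReal.ofReal ((1 - ‖a‖) ^ t /
          ((1 - x) ^ r * ‖1 - a * (x:ℂ)‖ ^ (s + t - r))) ∂μ)
        ≤ ENNReal.ofReal M) :
    ∃ C : ℝ, 0 < C ∧ ∀ x ∈ Ico (0:ℝ) 1, μ (Ico x 1) ≤ ENNReal.ofReal (C * (1 - x) ^ s) :=
  stmt_2_general s t r ht hr0 hrs μ M hsup
end

section
/- For r ≥ s > 0 and t > 0, the measure dμ₁(x) = (1-x)^{s-1} dx on [0,1) is an s-Carleson measure, yet sup_{a∈𝔻} ∫_{[0,1)} (1-|a|)^t / ((1-x)^r |1-ax|^{s+t-r}) dμ₁(x) = +∞. -/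
open MeasureTheory Set

open scoped ENNReal

/-! The density of `μ₁` integrates in closed form, `μ₁([x,1)) = (1-x)^s / s`. For the supremum the
single point `a = 0` suffices: there the integrand against `μ₁` is `(1-x)^(s-1-r) dx`, which is not
integrable at `1` because `s - 1 - r ≤ -1`. -/

theorem setLIntegral_Ico_comp_sub_left (a b : ℝ) (g : ℝ → ℝ≥0∞) :
    ∫⁻ y in Ico a b, g (b - y) = ∫⁻ u in Ioc 0 (b - a), g u := by
  have hpre : (fun y : ℝ => b - y) ⁻¹' Ioc 0 (b - a) = Ico a b := by
    ext y
    simp only [mem_preimage, mem_Ioc, mem_Ico]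
    constructor <;> rintro ⟨h₁, h₂⟩ <;> constructor <;> linarith
  rw [← hpre, (volume.measurePreserving_sub_left b).setLIntegral_comp_preimage_emb
    (measurableEmbedding_subLeft b)]

theorem lintegral_Ioc_zero_rpow_of_neg_one_lt {p c : ℝ} (hp : -1 < p) (hc : 0 ≤ c) :
    ∫⁻ u in Ioc 0 c, ENNReal.ofReal (u ^ p) = ENNReal.ofReal (c ^ (p + 1) / (p + 1)) := by
  have hint : IntegrableOn (fun u : ℝ => u ^ p) (Ioc 0 c) := by
    have := intervalIntegral.intervalIntegrable_rpow' (a := 0) (b := c) hp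
    rwa [intervalIntegrable_iff, uIoc_of_le hc] at this
  rw [← ofReal_integral_eq_lintegral_ofReal hint, ← intervalIntegral.integral_of_le hc,
    integral_rpow (Or.inl hp), Real.zero_rpow (by linarith), sub_zero]
  filter_upwards [ae_restrict_mem measurableSet_Ioc] with u hu
  exact Real.rpow_nonneg hu.1.le p

theorem lintegral_Ioc_zero_rpow_of_le_neg_one {p c : ℝ} (hp : p ≤ -1) (hc : 0 < c) :
    ∫⁻ u in Ioc 0 c, ENNReal.ofReal (u ^ p) = ∞ := by
  by_contra hfin
  have hint : IntegrableOn (fun u : ℝ => u ^ p) (Ioc 0 c) := by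
    refine (lintegral_ofReal_ne_top_iff_integrable (by fun_prop) ?_).mp hfin
    filter_upwards [ae_restrict_mem measurableSet_Ioc] with u hu
    exact Real.rpow_nonneg hu.1.le p
  have := (intervalIntegral.integrableOn_Ioo_rpow_iff hc).mp (hint.mono_set Ioo_subset_Ioc_self)
  linarith

theorem setLIntegral_withDensity_restrict {α : Type*} [MeasurableSpace α] (μ : Measure α)
    {ρ f : α → ℝ≥0∞} (hρ : Measurable ρ) (hf : Measurable f) {A B : Set α}
    (hA : MeasurableSet A) (hAB : A ⊆ B) :
    ∫⁻ x in A, f x ∂((μ.restrict B).withDensity ρ) = ∫⁻ x in A, ρ x * f x ∂μ := by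
  rw [setLIntegral_withDensity_eq_setLIntegral_mul _ hρ hf hA, Measure.restrict_restrict hA,
    inter_eq_left.mpr hAB]
  rfl

theorem stmt_4_general (s t r : ℝ) (hs : 0 < s) (hrs : s ≤ r) :
    (∃ C : ℝ, 0 < C ∧ ∀ x ∈ Ico (0:ℝ) 1,
        ((volume.restrict (Ico (0:ℝ) 1)).withDensity
          (fun x => ENNReal.ofReal ((1 - x) ^ (s - 1)))) (Ico x 1)
          ≤ ENNReal.ofReal (C * (1 - x) ^ s)) ∧
    (⨆ a : Metric.ball (0:ℂ) 1,
      ∫⁻ x in Ico (0:ℝ) 1,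
        ENNReal.ofReal ((1 - ‖(a:ℂ)‖) ^ t /
          ((1 - x) ^ r * ‖1 - (a:ℂ) * (x:ℂ)‖ ^ (s + t - r)))
        ∂((volume.restrict (Ico (0:ℝ) 1)).withDensity
            (fun x => ENNReal.ofReal ((1 - x) ^ (s - 1))))) = ⊤ := by
  have hρ : Measurable fun x : ℝ => ENNReal.ofReal ((1 - x) ^ (s - 1)) := by fun_prop
  refine ⟨⟨1 / s, by positivity, fun x hx => le_of_eq ?_⟩, top_unique ?_⟩
  · rw [← setLIntegral_one, setLIntegral_withDensity_restrict _ hρ measurable_const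
      measurableSet_Ico (Ico_subset_Ico_left hx.1)]
    simp only [mul_one]
    rw [setLIntegral_Ico_comp_sub_left x 1 (fun u => ENNReal.ofReal (u ^ (s - 1))),
      lintegral_Ioc_zero_rpow_of_neg_one_lt (by linarith) (by linarith [hx.2]), sub_add_cancel,
      one_div_mul_eq_div]
  · refine le_iSup_of_le (⟨0, Metric.mem_ball_self one_pos⟩ : Metric.ball (0:ℂ) 1) ?_
    simp only [norm_zero, sub_zero, Real.one_rpow, zero_mul, norm_one, mul_one, one_div]
    rw [setLIntegral_withDensity_restrict _ hρ (by fun_prop) measurableSet_Ico subset_rfl]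
    have hpow : ∀ x ∈ Ico (0:ℝ) 1, ENNReal.ofReal ((1 - x) ^ (s - 1)) *
        ENNReal.ofReal (((1 - x) ^ r)⁻¹) = ENNReal.ofReal ((1 - x) ^ (s - 1 - r)) := by
      intro x hx
      have hx' : 0 < 1 - x := by linarith [hx.2]
      rw [← ENNReal.ofReal_mul (by positivity), ← Real.rpow_neg hx'.le, ← Real.rpow_add hx',
        ← sub_eq_add_neg]
    rw [setLIntegral_congr_fun measurableSet_Ico hpow,
      setLIntegral_Ico_comp_sub_left 0 1 (fun u => ENNReal.ofReal (u ^ (s - 1 - r))), sub_zero,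
      lintegral_Ioc_zero_rpow_of_le_neg_one (by linarith) one_pos]

theorem stmt_4 (s t r : ℝ) (hs : 0 < s) (ht : 0 < t) (hrs : s ≤ r) :
    (∃ C : ℝ, 0 < C ∧ ∀ x ∈ Ico (0:ℝ) 1,
        ((volume.restrict (Ico (0:ℝ) 1)).withDensity
          (fun x => ENNReal.ofReal ((1 - x) ^ (s - 1)))) (Ico x 1)
          ≤ ENNReal.ofReal (C * (1 - x) ^ s)) ∧
    (⨆ a : Metric.ball (0:ℂ) 1,
      ∫⁻ x in Ico (0:ℝ) 1,
        ENNReal.ofReal ((1 - ‖(a:ℂ)‖) ^ t /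
          ((1 - x) ^ r * ‖1 - (a:ℂ) * (x:ℂ)‖ ^ (s + t - r)))
        ∂((volume.restrict (Ico (0:ℝ) 1)).withDensity
            (fun x => ENNReal.ofReal ((1 - x) ^ (s - 1))))) = ⊤ :=
  stmt_4_general s t r hs hrs
end

section
/- Let μ be a finite positive Borel measure on [0,1) and s > 0, and let μ_n = ∫_{[0,1)} t^n dμ(t) be its moments. Then μ is an s-Carleson measure if and only if sup_{n≥0} (1+n)^s μ_n < ∞. -/
/-!
Forward direction, by the layer-cake formula:
`μ_n = ∫₀¹ μ{x ∈ [0,1) : x^n > t} dt ≤ C ∫₀¹ (1 - t^{1/n})^s dt`, and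
`1 - t^{1/n} ≤ -log t / n ≤ (2s/n) t^{-1/(2s)}` bounds the integrand by `C (2s/n)^s t^{-1/2}`.

Converse: for `n ≈ 1/(2(1-x))` Bernoulli's inequality gives `t^n ≥ 1/2` on `[x,1)`, hence
`μ[x,1) ≤ 2 μ_n ≤ 2M (1+n)^{-s} ≤ 2^{s+1} M (1-x)^s`.
-/

open MeasureTheory Set Real

noncomputable section

def momentIco (μ : Measure ℝ) (n : ℕ) : ℝ := ∫ x in Ico (0 : ℝ) 1, x ^ n ∂μ

def IsCarlesonWith (μ : Measure ℝ) (s C : ℝ) : Prop :=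
  ∀ x ∈ Ico (0 : ℝ) 1, μ (Ico x 1) ≤ ENNReal.ofReal (C * (1 - x) ^ s)

end

section ElementaryBounds

variable {s t : ℝ}

lemma one_sub_rpow_le_neg_mul_log (ht : 0 < t) (p : ℝ) : 1 - t ^ p ≤ -(p * log t) := by
  have := log_le_sub_one_of_pos (rpow_pos_of_pos ht p)
  rw [log_rpow ht] at this
  linarith

lemma neg_log_le_rpow_neg_div (ht : 0 < t) {ε : ℝ} (hε : 0 < ε) :
    -log t ≤ t ^ (-ε) / ε := by
  simpa [log_inv, inv_rpow ht.le, rpow_neg ht.le] using log_le_rpow_div (inv_pos.2 ht).le hε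

lemma one_sub_rpow_rpow_le {p : ℝ} (hs : 0 < s) (hp : 0 ≤ p) (ht₀ : 0 < t) (ht₁ : t ≤ 1) :
    (1 - t ^ p) ^ s ≤ (2 * s * p) ^ s * t ^ (-2⁻¹ : ℝ) := by
  have hlin : 1 - t ^ p ≤ 2 * s * p * t ^ (-(2 * s)⁻¹) :=
    calc 1 - t ^ p ≤ p * -log t := by linarith [one_sub_rpow_le_neg_mul_log ht₀ p]
      _ ≤ p * (t ^ (-(2 * s)⁻¹) / (2 * s)⁻¹) :=
        mul_le_mul_of_nonneg_left (neg_log_le_rpow_neg_div ht₀ (by positivity)) hp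
      _ = 2 * s * p * t ^ (-(2 * s)⁻¹) := by field_simp
  calc (1 - t ^ p) ^ s ≤ (2 * s * p * t ^ (-(2 * s)⁻¹)) ^ s :=
        rpow_le_rpow (sub_nonneg.2 (rpow_le_one ht₀.le ht₁ hp)) hlin hs.le
    _ = (2 * s * p) ^ s * t ^ (-2⁻¹ : ℝ) := by
        rw [mul_rpow (by positivity) (by positivity), ← rpow_mul ht₀.le]
        congr 2
        field_simp

lemma integral_Ioo_rpow_neg_half : ∫ t in Ioo (0 : ℝ) 1, t ^ (-2⁻¹ : ℝ) = 2 := by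
  rw [← integral_Ioc_eq_integral_Ioo, ← intervalIntegral.integral_of_le zero_le_one,
    integral_rpow (Or.inl (by norm_num)), one_rpow, zero_rpow (by norm_num)]
  norm_num

lemma exists_nat_mul_le_half_lt {ε : ℝ} (hε : 0 < ε) :
    ∃ n : ℕ, n * ε ≤ 2⁻¹ ∧ 2⁻¹ < (n + 1) * ε := by
  refine ⟨⌊(2 * ε)⁻¹⌋₊, ?_, ?_⟩
  · have := Nat.floor_le (inv_nonneg.2 (by positivity : (0 : ℝ) ≤ 2 * ε))
    calc _ ≤ (2 * ε)⁻¹ * ε := by gcongr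
      _ = 2⁻¹ := by field_simp
  · have := Nat.lt_floor_add_one (2 * ε)⁻¹
    calc (2⁻¹ : ℝ) = (2 * ε)⁻¹ * ε := by field_simp
      _ < _ := by gcongr

lemma inv_two_le_pow {x : ℝ} {n : ℕ} (hx : 0 ≤ x) (hn : n * (1 - x) ≤ 2⁻¹) :
    2⁻¹ ≤ x ^ n := by
  have := one_add_mul_le_pow (a := x - 1) (by linarith) n
  simp only [add_sub_cancel] at this
  linarith

end ElementaryBounds

section Moments

variable (μ : Measure ℝ)

lemma momentIco_zero : momentIco μ 0 = μ.real (Ico 0 1) := by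
  simp [momentIco]

variable [IsFiniteMeasure μ]

lemma integrableOn_pow_Ico (n : ℕ) : IntegrableOn (fun x : ℝ => x ^ n) (Ico 0 1) μ :=
  ((continuous_pow n).continuousOn.integrableOn_Icc).mono_set Ico_subset_Icc_self

lemma pow_mul_measureReal_Ico_le_momentIco {x : ℝ} (hx : 0 ≤ x) (n : ℕ) :
    x ^ n * μ.real (Ico x 1) ≤ momentIco μ n := by
  have hsub : Ico x 1 ⊆ Ico 0 1 := Ico_subset_Ico hx le_rfl
  calc x ^ n * μ.real (Ico x 1) ≤ ∫ t in Ico x 1, t ^ n ∂μ :=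
        setIntegral_ge_of_const_le_real measurableSet_Ico (measure_ne_top μ _)
          (fun t ht => pow_le_pow_left₀ hx ht.1 n) ((integrableOn_pow_Ico μ n).mono_set hsub)
    _ ≤ momentIco μ n :=
        setIntegral_mono_set (integrableOn_pow_Ico μ n)
          (ae_restrict_of_forall_mem measurableSet_Ico fun t ht => pow_nonneg ht.1 n)
          hsub.eventuallyLE

end Moments

namespace IsCarlesonWith

variable {μ : Measure ℝ} {s C : ℝ}

lemma mono (h : IsCarlesonWith μ s C) {C' : ℝ} (hC : C ≤ C') :
    IsCarlesonWith μ s C' := fun x hx =>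
  (h x hx).trans <| ENNReal.ofReal_le_ofReal <|
    mul_le_mul_of_nonneg_right hC (rpow_nonneg (sub_nonneg.2 hx.2.le) s)

lemma measureReal_Ico_le (h : IsCarlesonWith μ s C) (hC : 0 ≤ C) {x : ℝ}
    (hx : x ∈ Ico (0 : ℝ) 1) :
    μ.real (Ico x 1) ≤ C * (1 - x) ^ s :=
  ENNReal.toReal_le_of_le_ofReal (mul_nonneg hC (rpow_nonneg (sub_nonneg.2 hx.2.le) s)) (h x hx)

lemma measureReal_setOf_lt_pow_le [IsFiniteMeasure μ] (h : IsCarlesonWith μ s C) (hs : 0 < s)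
    (hC : 0 ≤ C) {n : ℕ} (hn : n ≠ 0) {t : ℝ} (ht : 0 < t) :
    (μ.restrict (Ico 0 1)).real {a | t < a ^ n} ≤
      (Ioo 0 1).indicator (fun u => C * (2 * s / n) ^ s * u ^ (-2⁻¹ : ℝ)) t := by
  have hsub : {a : ℝ | t < a ^ n} ∩ Ico 0 1 ⊆ Ico (t ^ (n⁻¹ : ℝ)) 1 := fun a ha =>
    ⟨(rpow_le_rpow ht.le ha.1.le (by positivity)).trans_eq (pow_rpow_inv_natCast ha.2.1 hn),
      ha.2.2⟩
  rw [measureReal_restrict_apply' measurableSet_Ico]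
  refine (measureReal_mono hsub).trans ?_
  rcases lt_or_ge t 1 with ht₁ | ht₁
  · rw [indicator_of_mem (show t ∈ Ioo 0 1 from ⟨ht, ht₁⟩)]
    calc μ.real (Ico (t ^ (n⁻¹ : ℝ)) 1) ≤ C * (1 - t ^ (n⁻¹ : ℝ)) ^ s :=
          h.measureReal_Ico_le hC ⟨by positivity, rpow_lt_one ht.le ht₁ (by positivity)⟩
      _ ≤ C * ((2 * s * (n : ℝ)⁻¹) ^ s * t ^ (-2⁻¹ : ℝ)) := by
          gcongr; exact one_sub_rpow_rpow_le hs (by positivity) ht ht₁.le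
      _ = C * (2 * s / n) ^ s * t ^ (-2⁻¹ : ℝ) := by rw [div_eq_mul_inv]; ring
  · rw [indicator_of_notMem (fun h => ht₁.not_gt h.2),
      Ico_eq_empty (one_le_rpow ht₁ (by positivity)).not_gt, measureReal_empty]

lemma momentIco_le [IsFiniteMeasure μ] (h : IsCarlesonWith μ s C) (hs : 0 < s) (hC : 0 ≤ C)
    {n : ℕ} (hn : n ≠ 0) :
    momentIco μ n ≤ 2 * C * (2 * s / n) ^ s := by
  set g := (Ioo (0 : ℝ) 1).indicator fun u => C * (2 * s / n) ^ s * u ^ (-2⁻¹ : ℝ)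
  have hg : Integrable g :=
    IntegrableOn.integrable_indicator
      (((intervalIntegral.integrableOn_Ioo_rpow_iff (s := -2⁻¹) one_pos).2
        (by norm_num)).const_mul _) measurableSet_Ioo
  calc momentIco μ n = ∫ t in Ioi 0, (μ.restrict (Ico 0 1)).real {a | t < a ^ n} :=
        (integrableOn_pow_Ico μ n).integral_eq_integral_meas_lt
          (ae_restrict_of_forall_mem measurableSet_Ico fun t ht => pow_nonneg ht.1 n)
    _ ≤ ∫ t in Ioi 0, g t :=
        integral_mono_of_nonneg (ae_of_all _ fun _ => measureReal_nonneg) hg.integrableOn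
          (ae_restrict_of_forall_mem measurableSet_Ioi fun _ ht =>
            h.measureReal_setOf_lt_pow_le hs hC hn ht)
    _ = 2 * C * (2 * s / n) ^ s := by
        rw [setIntegral_indicator measurableSet_Ioo, inter_eq_right.2 Ioo_subset_Ioi_self,
          integral_const_mul, integral_Ioo_rpow_neg_half]
        ring

lemma exists_forall_rpow_mul_momentIco_le [IsFiniteMeasure μ] (h : IsCarlesonWith μ s C)
    (hs : 0 < s) (hC : 0 ≤ C) :
    ∃ M : ℝ, ∀ n : ℕ, (1 + n : ℝ) ^ s * momentIco μ n ≤ M := by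
  refine ⟨C + 2 * C * (4 * s) ^ s, fun n => ?_⟩
  rcases eq_or_ne n 0 with rfl | hn
  · have hμ := h.measureReal_Ico_le hC ⟨le_rfl, zero_lt_one⟩
    rw [sub_zero, one_rpow, mul_one] at hμ
    rw [Nat.cast_zero, add_zero, one_rpow, one_mul, momentIco_zero]
    have : 0 ≤ 2 * C * (4 * s) ^ s := by positivity
    linarith
  · have hn' : (1 : ℝ) ≤ n := Nat.one_le_cast.2 (Nat.one_le_iff_ne_zero.2 hn)
    have hfactor : (1 + n) * (2 * s / n) ≤ 4 * s := by
      rw [mul_div_assoc', div_le_iff₀ (by positivity)]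
      nlinarith
    calc (1 + n : ℝ) ^ s * momentIco μ n ≤ (1 + n : ℝ) ^ s * (2 * C * (2 * s / n) ^ s) :=
          mul_le_mul_of_nonneg_left (h.momentIco_le hs hC hn) (by positivity)
      _ = 2 * C * ((1 + n) * (2 * s / n)) ^ s := by
          rw [mul_rpow (by positivity) (by positivity)]; ring
      _ ≤ 2 * C * (4 * s) ^ s := by gcongr
      _ ≤ C + 2 * C * (4 * s) ^ s := le_add_of_nonneg_left hC

end IsCarlesonWith

lemma isCarlesonWith_of_forall_rpow_mul_momentIco_le {μ : Measure ℝ} [IsFiniteMeasure μ]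
    {s M : ℝ} (hs : 0 ≤ s) (hM : ∀ n : ℕ, (1 + n : ℝ) ^ s * momentIco μ n ≤ M) :
    IsCarlesonWith μ s (2 * 2 ^ s * M) := by
  intro x hx
  have hx₁ : 0 < 1 - x := sub_pos.2 hx.2
  obtain ⟨n, hn, hn₁⟩ := exists_nat_mul_le_half_lt hx₁
  have hpos : 0 < (1 + n : ℝ) ^ s := by positivity
  have hmoment : momentIco μ n ≤ M / (1 + n : ℝ) ^ s := by
    rw [le_div_iff₀ hpos, mul_comm]; exact hM n
  have hscale : 1 ≤ 2 ^ s * (1 - x) ^ s * (1 + n : ℝ) ^ s := by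
    rw [← mul_rpow zero_le_two hx₁.le, ← mul_rpow (by positivity) (by positivity)]
    exact one_le_rpow (by linarith) hs
  have hM₀ : 0 ≤ M := (hM 0).trans' (by simp [momentIco_zero])
  rw [← ENNReal.ofReal_toReal (measure_ne_top μ _)]
  refine ENNReal.ofReal_le_ofReal ?_
  calc μ.real (Ico x 1) ≤ 2 * (x ^ n * μ.real (Ico x 1)) := by
        nlinarith [inv_two_le_pow hx.1 hn, measureReal_nonneg (μ := μ) (s := Ico x 1)]
    _ ≤ 2 * (M / (1 + n : ℝ) ^ s) := by
        gcongr; exact (pow_mul_measureReal_Ico_le_momentIco μ hx.1 n).trans hmoment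
    _ ≤ 2 * (M / (1 + n : ℝ) ^ s) * (2 ^ s * (1 - x) ^ s * (1 + n : ℝ) ^ s) :=
        le_mul_of_one_le_right (by positivity) hscale
    _ = 2 * 2 ^ s * M * (1 - x) ^ s := by field_simp

theorem stmt_5 (s : ℝ) (hs : 0 < s) (μ : Measure ℝ) [IsFiniteMeasure μ] :
    (∃ C : ℝ, 0 < C ∧ ∀ x ∈ Ico (0:ℝ) 1, μ (Ico x 1) ≤ ENNReal.ofReal (C * (1 - x) ^ s)) ↔
    (∃ M : ℝ, ∀ n : ℕ, (1 + n : ℝ) ^ s * (∫ x in Ico (0:ℝ) 1, x ^ n ∂μ) ≤ M) := by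
  constructor
  · rintro ⟨C, hC, hμ⟩
    exact IsCarlesonWith.exists_forall_rpow_mul_momentIco_le hμ hs hC.le
  · rintro ⟨M, hM⟩
    exact ⟨max (2 * 2 ^ s * M) 1, lt_max_of_lt_right one_pos,
      (isCarlesonWith_of_forall_rpow_mul_momentIco_le hs.le hM).mono (le_max_left _ _)⟩
end

section
/- Suppose s > 0 and μ is a finite positive Borel measure on [0,1) with moments μ_n. If the function f_{μ,s}(z) = Σ_n (Γ(n+s)/(Γ(s)n!)) μ_n z^n belongs to the Bloch space (i.e., sup_{z∈𝔻} (1-|z|^2)|f_{μ,s}'(z)| < ∞), then μ is an s-Carleson measure. -/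
/-!
Write `c_n(s) = Γ(n+s)/(Γ(s) n!)`, the Taylor coefficients of `(1 - y)^(-s)`, and `μ_n` for the
moments of `μ`. Since `(n+1) c_{n+1}(s) = s c_n(s+1)` and `μ_{n+1} ≥ t^(n+1) μ([t,1))`, comparing
the derivative series termwise with the binomial series of `(1 - t²)^(-s-1)` gives
`f'(t) ≥ s t μ([t,1)) / (1 - t²)^(s+1)` for `0 ≤ t < 1`. The Bloch bound `(1 - t²) |f'(t)| ≤ B`
then yields `μ([t,1)) ≤ B (1 - t²)^s / (s t) ≤ 2^(s+1) B / s · (1 - t)^s` for `t ≥ 1/2`, and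
finiteness of `μ` handles `t < 1/2`.
-/

open MeasureTheory Set FormalMultilinearSeries
open scoped Nat

lemma Metric.eball_one {α : Type*} [PseudoMetricSpace α] (x : α) :
    Metric.eball x 1 = Metric.ball x 1 := by
  exact_mod_cast Metric.eball_coe (x := x) (ε := 1)

section PowerSeries

theorem one_le_radius_ofScalars {a : ℕ → ℂ}
    (ha : ∀ z ∈ Metric.ball (0:ℂ) 1, Summable (fun n => a n * z ^ n)) :
    1 ≤ (ofScalars ℂ a).radius := by
  refine ENNReal.le_of_forall_nnreal_lt fun r hr => ?_
  have hr1 : ((r : ℝ) : ℂ) ∈ Metric.ball (0:ℂ) 1 := by simpa using hr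
  refine le_radius_of_tendsto _ (l := 0) ?_
  simpa [ofScalars_norm] using (ha _ hr1).tendsto_atTop_zero.norm

theorem hasFPowerSeriesOnBall_ofScalars_of_hasSum {a : ℕ → ℂ} {f : ℂ → ℂ}
    (hf : ∀ z ∈ Metric.ball (0:ℂ) 1, HasSum (fun n => a n * z ^ n) (f z)) :
    HasFPowerSeriesOnBall f (ofScalars ℂ a) 0 1 where
  r_le := one_le_radius_ofScalars fun z hz => (hf z hz).summable
  r_pos := one_pos
  hasSum {y} hy := by
    simpa [ofScalars_apply_eq, mul_comm] using hf y (Metric.eball_one (0:ℂ) ▸ hy)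

theorem derivSeries_ofScalars_apply (a : ℕ → ℂ) (n : ℕ) (z : ℂ) :
    (ofScalars ℂ a).derivSeries n (fun _ => z) 1 = (n + 1) * a (n + 1) * z ^ n := by
  rw [apply_eq_prod_smul_coeff, _root_.smul_apply, derivSeries_coeff_one, coeff_ofScalars]
  simp only [Finset.prod_const, Finset.card_univ, Fintype.card_fin, nsmul_eq_mul, smul_eq_mul]
  push_cast
  ring

theorem hasSum_deriv_of_hasSum_mul_pow {a : ℕ → ℂ} {f : ℂ → ℂ}
    (hf : ∀ z ∈ Metric.ball (0:ℂ) 1, HasSum (fun n => a n * z ^ n) (f z))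
    {z : ℂ} (hz : z ∈ Metric.ball (0:ℂ) 1) :
    HasSum (fun n => (n + 1) * a (n + 1) * z ^ n) (deriv f z) := by
  have hps := (hasFPowerSeriesOnBall_ofScalars_of_hasSum hf).fderiv
  have := (hps.hasSum (Metric.eball_one (0:ℂ) ▸ hz)).mapL (ContinuousLinearMap.apply ℂ ℂ 1)
  simpa only [zero_add, ContinuousLinearMap.apply_apply, derivSeries_ofScalars_apply,
    fderiv_apply_one_eq_deriv] using this

end PowerSeries

section GammaCoeff

noncomputable def gammaCoeff (s : ℝ) (n : ℕ) : ℝ := Real.Gamma (n + s) / (Real.Gamma s * n !)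

lemma Real.Gamma_nat_add_eq_mul_ascPochhammer {s : ℝ} (hs : 0 < s) (n : ℕ) :
    Real.Gamma (n + s) = Real.Gamma s * (ascPochhammer ℝ n).eval s := by
  induction n with
  | zero => simp
  | succ n ih =>
    rw [ascPochhammer_succ_eval, Nat.cast_succ, add_right_comm,
      Real.Gamma_add_one (by positivity), ih]
    ring

lemma gammaCoeff_eq_choose {s : ℝ} (hs : 0 < s) (n : ℕ) :
    gammaCoeff s n = Ring.choose (s + n - 1) n := by
  have h := Ring.factorial_nsmul_multichoose_eq_ascPochhammer s n
  rw [nsmul_eq_mul, Polynomial.ascPochhammer_smeval_eq_eval] at h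
  have := Real.Gamma_pos_of_pos hs
  rw [← Ring.multichoose_eq, gammaCoeff, Real.Gamma_nat_add_eq_mul_ascPochhammer hs, ← h]
  field_simp

lemma gammaCoeff_nonneg {s : ℝ} (hs : 0 < s) (n : ℕ) : 0 ≤ gammaCoeff s n := by
  have := Real.Gamma_pos_of_pos hs
  have := Real.Gamma_pos_of_pos (show 0 < n + s by positivity)
  unfold gammaCoeff
  positivity

lemma succ_mul_gammaCoeff_succ {s : ℝ} (hs : 0 < s) (n : ℕ) :
    (n + 1) * gammaCoeff s (n + 1) = s * gammaCoeff (s + 1) n := by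
  have := Real.Gamma_pos_of_pos hs
  simp only [gammaCoeff, Nat.factorial_succ, Nat.cast_mul, Nat.cast_succ,
    Real.Gamma_add_one hs.ne', add_right_comm _ (1:ℝ) s, add_assoc]
  field_simp

theorem hasSum_gammaCoeff_mul_pow {s : ℝ} (hs : 0 < s) {y : ℝ} (hy : |y| < 1) :
    HasSum (fun n => gammaCoeff s n * y ^ n) (1 / (1 - y) ^ s) := by
  have hy' : y ∈ Metric.eball (0:ℝ) 1 := by simpa [Metric.eball_one] using hy
  simpa [ofScalars_apply_eq, gammaCoeff_eq_choose hs, mul_comm]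
    using (Real.one_div_one_sub_rpow_hasFPowerSeriesOnBall_zero s).hasSum hy'

end GammaCoeff

section Carleson

lemma pow_mul_measureReal_Ico_le_setIntegral_pow (μ : Measure ℝ) [IsFiniteMeasure μ] {t : ℝ}
    (ht : 0 ≤ t) (n : ℕ) :
    t ^ n * μ.real (Ico t 1) ≤ ∫ x in Ico (0:ℝ) 1, x ^ n ∂μ := by
  have hsub : Ico t 1 ⊆ Ico (0:ℝ) 1 := Ico_subset_Ico ht le_rfl
  have hint : IntegrableOn (fun x : ℝ => x ^ n) (Ico 0 1) μ := by
    refine Measure.integrableOn_of_bounded (M := 1) (measure_ne_top μ _)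
      (continuous_pow n).aestronglyMeasurable ?_
    filter_upwards [ae_restrict_mem measurableSet_Ico] with x hx
    rw [norm_pow, Real.norm_of_nonneg hx.1]
    exact pow_le_one₀ hx.1 hx.2.le
  calc t ^ n * μ.real (Ico t 1) ≤ ∫ x in Ico t 1, x ^ n ∂μ :=
        setIntegral_ge_of_const_le_real measurableSet_Ico (measure_ne_top μ _)
          (fun x hx => pow_le_pow_left₀ ht hx.1 n) (hint.mono_set hsub)
    _ ≤ ∫ x in Ico (0:ℝ) 1, x ^ n ∂μ :=
        setIntegral_mono_set hint
          (by filter_upwards [ae_restrict_mem measurableSet_Ico] with x hx using pow_nonneg hx.1 n)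
          hsub.eventuallyLE

variable {s : ℝ} {μ : Measure ℝ} [IsFiniteMeasure μ] {f : ℂ → ℂ}

theorem mul_measureReal_Ico_div_le_norm_deriv (hs : 0 < s)
    (hf : ∀ z ∈ Metric.ball (0:ℂ) 1, HasSum (fun n : ℕ =>
      ((gammaCoeff s n * ∫ x in Ico (0:ℝ) 1, x ^ n ∂μ : ℝ) : ℂ) * z ^ n) (f z))
    {t : ℝ} (ht0 : 0 ≤ t) (ht1 : t < 1) :
    s * t * μ.real (Ico t 1) / (1 - t ^ 2) ^ (s + 1) ≤ ‖deriv f t‖ := by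
  set M := μ.real (Ico t 1)
  have ht : (t : ℂ) ∈ Metric.ball (0:ℂ) 1 := by simpa [abs_of_nonneg ht0] using ht1
  have hderiv : HasSum (fun n : ℕ => (n + 1) * gammaCoeff s (n + 1) *
      (∫ x in Ico (0:ℝ) 1, x ^ (n + 1) ∂μ) * t ^ n) (deriv f t).re := by
    simpa [mul_assoc, ← Complex.ofReal_pow] using
      Complex.hasSum_re (hasSum_deriv_of_hasSum_mul_pow hf ht)
  have hgeom : HasSum (fun n : ℕ => s * t * M * (gammaCoeff (s + 1) n * (t ^ 2) ^ n))
      (s * t * M * (1 / (1 - t ^ 2) ^ (s + 1))) := by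
    refine (hasSum_gammaCoeff_mul_pow (by linarith) ?_).mul_left _
    rw [abs_of_nonneg (by positivity)]
    nlinarith
  calc s * t * M / (1 - t ^ 2) ^ (s + 1) = s * t * M * (1 / (1 - t ^ 2) ^ (s + 1)) := by ring
    _ ≤ (deriv f t).re := hasSum_le (fun n => ?_) hgeom hderiv
    _ ≤ ‖deriv f t‖ := Complex.re_le_norm _
  have hc := gammaCoeff_nonneg (show 0 < s + 1 by linarith) n
  rw [succ_mul_gammaCoeff_succ hs]
  calc s * t * M * (gammaCoeff (s + 1) n * (t ^ 2) ^ n)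
      = s * gammaCoeff (s + 1) n * (t ^ (n + 1) * M) * t ^ n := by ring
    _ ≤ s * gammaCoeff (s + 1) n * (∫ x in Ico (0:ℝ) 1, x ^ (n + 1) ∂μ) * t ^ n := by
      gcongr
      exact pow_mul_measureReal_Ico_le_setIntegral_pow μ ht0 (n + 1)

theorem measureReal_Ico_le_of_bloch (hs : 0 < s)
    (hf : ∀ z ∈ Metric.ball (0:ℂ) 1, HasSum (fun n : ℕ =>
      ((gammaCoeff s n * ∫ x in Ico (0:ℝ) 1, x ^ n ∂μ : ℝ) : ℂ) * z ^ n) (f z))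
    {B : ℝ} (hB : ∀ z ∈ Metric.ball (0:ℂ) 1, (1 - ‖z‖ ^ 2) * ‖deriv f z‖ ≤ B)
    {t : ℝ} (ht0 : 1 / 2 ≤ t) (ht1 : t < 1) :
    μ.real (Ico t 1) ≤ 2 ^ (s + 1) * B / s * (1 - t) ^ s := by
  set M := μ.real (Ico t 1)
  set u := 1 - t ^ 2
  have hu : 0 < u := by nlinarith
  have hderiv := mul_measureReal_Ico_div_le_norm_deriv hs hf (by linarith) ht1
  have hbloch : u * ‖deriv f t‖ ≤ B := by
    simpa [abs_of_nonneg (by linarith : (0:ℝ) ≤ t)] using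
      hB t (by simpa [abs_lt] using ⟨by linarith, ht1⟩)
  have hst : s * t * M ≤ u ^ s * B := calc
    s * t * M = u ^ s * u * (s * t * M / u ^ (s + 1)) := by
      rw [Real.rpow_add_one hu.ne']; field_simp
    _ ≤ u ^ s * u * ‖deriv f t‖ := by gcongr
    _ ≤ u ^ s * B := by rw [mul_assoc]; gcongr
  have hu2 : u ^ s ≤ 2 ^ s * (1 - t) ^ s := by
    rw [← Real.mul_rpow (by norm_num) (by linarith)]
    gcongr
    nlinarith
  have hB0 : 0 ≤ B := (mul_nonneg hu.le (norm_nonneg _)).trans hbloch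
  have hM : 0 ≤ M := measureReal_nonneg
  have hsM : s * M ≤ 2 * (2 ^ s * (1 - t) ^ s * B) := calc
    s * M ≤ 2 * (s * t * M) := by nlinarith [mul_nonneg hs.le hM]
    _ ≤ 2 * (u ^ s * B) := by gcongr
    _ ≤ 2 * (2 ^ s * (1 - t) ^ s * B) := by gcongr
  rw [Real.rpow_add_one two_ne_zero, div_mul_eq_mul_div, le_div_iff₀ hs]
  linarith

end Carleson

theorem stmt_10 (s : ℝ) (hs : 0 < s) (μ : Measure ℝ) [IsFiniteMeasure μ]
    (f : ℂ → ℂ)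
    (hf : ∀ z ∈ Metric.ball (0:ℂ) 1,
      HasSum (fun n : ℕ =>
        ((Real.Gamma ((n:ℝ) + s) / (Real.Gamma s * (Nat.factorial n : ℝ)) *
            ∫ x in Ico (0:ℝ) 1, x ^ n ∂μ : ℝ) : ℂ) * z ^ n) (f z))
    (hBloch : ∃ B : ℝ, ∀ z ∈ Metric.ball (0:ℂ) 1,
      (1 - ‖z‖ ^ 2) * ‖deriv f z‖ ≤ B) :
    ∃ C : ℝ, 0 < C ∧ ∀ x ∈ Ico (0:ℝ) 1, μ (Ico x 1) ≤ ENNReal.ofReal (C * (1 - x) ^ s) := by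
  obtain ⟨B, hB⟩ := hBloch
  have hB0 : 0 ≤ B := le_trans (norm_nonneg _) (by simpa using hB 0 (by simp))
  have hT : 0 ≤ μ.real univ := measureReal_nonneg
  refine ⟨2 ^ s * (2 * B / s + μ.real univ + 1), by positivity, fun t ⟨ht0, ht1⟩ => ?_⟩
  rw [← ofReal_measureReal]
  gcongr
  rcases le_or_gt (1 / 2) t with ht | ht
  · calc μ.real (Ico t 1) ≤ 2 ^ (s + 1) * B / s * (1 - t) ^ s :=
          measureReal_Ico_le_of_bloch hs hf hB ht ht1
      _ = 2 ^ s * (2 * B / s) * (1 - t) ^ s := by rw [Real.rpow_add_one two_ne_zero]; ring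
      _ ≤ _ := by gcongr; linarith
  · calc μ.real (Ico t 1) ≤ μ.real univ * (2 * (1 - t)) ^ s :=
          (measureReal_mono (subset_univ _)).trans
            (le_mul_of_one_le_right hT (Real.one_le_rpow (by linarith) hs.le))
      _ = 2 ^ s * μ.real univ * (1 - t) ^ s := by
          rw [Real.mul_rpow zero_le_two (by linarith)]; ring
      _ ≤ _ := by gcongr; linarith [div_nonneg (mul_nonneg zero_le_two hB0) hs.le]
end

section
/- Suppose s > 0, t > 0 and μ is a positive Borel measure on the open unit disk 𝔻. If sup_{a∈𝔻} ∫_𝔻 (1-|a|^2)^t / |1-\bar{a}w|^{s+t} dμ(w) < ∞, then μ is an s-Carleson measure on 𝔻, i.e., μ(S(I)) ≤ C|I|^s for every arc I of the unit circle, where S(I) = {rζ : 1-|I| < r < 1, ζ ∈ I} is the Carleson box over I. -/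
open MeasureTheory Set Real

/-- The Carleson box over the arc of the unit circle centered at `exp(iθ)` with
normalized arclength `h` (so that the whole circle has length 1). -/
def carlesonBox (θ h : ℝ) : Set ℂ :=
  {z : ℂ | 1 - h < ‖z‖ ∧ ‖z‖ < 1 ∧
    |Complex.arg (z * Complex.exp (-(θ:ℂ) * Complex.I))| ≤ π * h}

/- The test point `a = (1 - h) e^{iθ}` sits at the top of the box `S(I)`; on the box the kernel
`(1 - |a|²)^t / |1 - ā w|^{s+t}` is at least a constant times `h^t / h^{s+t} = h^{-s}`, because
`1 - |a|² ≥ h` while `|1 - ā w| ≤ (2 + π) h` (angular deviation at most `π h`, radial deviation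
at most `2h`). Integrating over the box bounds `μ(S(I)) h^{-s}` by the supremum. -/

namespace Complex

lemma norm_one_sub_ofReal_mul_le (r : ℝ) (u : ℂ) :
    ‖1 - r * u‖ ≤ |arg u| + |1 - r * ‖u‖| := by
  set e := exp (arg u * I)
  have he : ‖e‖ = 1 := norm_exp_ofReal_mul_I _
  have hsplit : 1 - r * u = -(exp (I * arg u) - 1) + ((1 - r * ‖u‖ : ℝ) : ℂ) * e := by
    conv_lhs => rw [← norm_mul_exp_arg_mul_I u]
    rw [mul_comm I]
    push_cast
    ring
  calc ‖1 - r * u‖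
      ≤ ‖exp (I * arg u) - 1‖ + ‖((1 - r * ‖u‖ : ℝ) : ℂ) * e‖ := by
        rw [hsplit]; exact (norm_add_le _ _).trans_eq (by rw [norm_neg])
    _ ≤ |arg u| + |1 - r * ‖u‖| := by
        rw [norm_mul, he, mul_one, norm_real, Real.norm_eq_abs]
        gcongr
        exact Real.norm_exp_I_mul_ofReal_sub_one_le

lemma one_sub_conj_mul_ne_zero {a w : ℂ} (ha : ‖a‖ ≤ 1) (hw : ‖w‖ < 1) :
    1 - (starRingEnd ℂ) a * w ≠ 0 := by
  have hlt : ‖(starRingEnd ℂ) a * w‖ < 1 := by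
    rw [norm_mul, norm_conj]
    nlinarith [norm_nonneg a, norm_nonneg w]
  intro h0
  rw [← sub_eq_zero.mp h0, norm_one] at hlt
  exact hlt.false

end Complex

section

open Complex

lemma measurableSet_carlesonBox (θ h : ℝ) : MeasurableSet (carlesonBox θ h) := by
  have hnorm : Measurable fun z : ℂ => ‖z‖ := continuous_norm.measurable
  have harg : Measurable fun z : ℂ => |arg (z * exp (-(θ:ℂ) * I))| :=
    (measurable_arg.comp (measurable_id.mul_const _)).abs
  exact (measurableSet_lt measurable_const hnorm).inter
    ((measurableSet_lt hnorm measurable_const).inter (measurableSet_le harg measurable_const))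

lemma carlesonBox_subset_ball (θ h : ℝ) : carlesonBox θ h ⊆ Metric.ball 0 1 :=
  fun _ hw => mem_ball_zero_iff.mpr hw.2.1

lemma norm_one_sub_conj_mul_le_of_mem_carlesonBox {θ h : ℝ} (hh : h ≤ 1) {w : ℂ}
    (hw : w ∈ carlesonBox θ h) :
    ‖1 - (starRingEnd ℂ) ((1 - h : ℝ) * exp (θ * I)) * w‖ ≤ (2 + π) * h := by
  obtain ⟨hw₁, hw₂, hw₃⟩ := hw
  set u := w * exp (-(θ:ℂ) * I)
  have hu : ‖u‖ = ‖w‖ := by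
    rw [norm_mul, show -(θ:ℂ) * I = ((-θ : ℝ) : ℂ) * I by push_cast; ring,
      norm_exp_ofReal_mul_I, mul_one]
  have hconj : (starRingEnd ℂ) ((1 - h : ℝ) * exp (θ * I)) * w = (1 - h : ℝ) * u := by
    rw [map_mul, conj_ofReal, ← exp_conj, map_mul, conj_ofReal, conj_I, mul_neg, ← neg_mul]
    ring
  have hradial : |1 - (1 - h) * ‖u‖| ≤ 2 * h := by
    rw [hu, abs_le]
    constructor <;> nlinarith
  calc ‖1 - (starRingEnd ℂ) ((1 - h : ℝ) * exp (θ * I)) * w‖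
      ≤ |arg u| + |1 - (1 - h) * ‖u‖| := hconj ▸ norm_one_sub_ofReal_mul_le _ u
    _ ≤ π * h + 2 * h := add_le_add hw₃ hradial
    _ = (2 + π) * h := by ring

lemma inv_le_kernel_of_mem_carlesonBox {s t θ h : ℝ} (hs : 0 < s) (ht : 0 < t) (hh : 0 < h)
    (hh₁ : h ≤ 1) {w : ℂ} (hw : w ∈ carlesonBox θ h) :
    ((2 + π) ^ (s + t) * h ^ s)⁻¹ ≤
      (1 - ‖((1 - h : ℝ) : ℂ) * exp (θ * I)‖ ^ 2) ^ t /
        ‖1 - (starRingEnd ℂ) ((1 - h : ℝ) * exp (θ * I)) * w‖ ^ (s + t) := by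
  set a : ℂ := (1 - h : ℝ) * exp (θ * I)
  have ha : ‖a‖ = 1 - h := by
    rw [norm_mul, norm_real, Real.norm_eq_abs, norm_exp_ofReal_mul_I, mul_one,
      abs_of_nonneg (by linarith)]
  have hnum : h ≤ 1 - ‖a‖ ^ 2 := by rw [ha]; nlinarith
  have hden_pos : 0 < ‖1 - (starRingEnd ℂ) a * w‖ :=
    norm_pos_iff.mpr (one_sub_conj_mul_ne_zero (by rw [ha]; linarith) hw.2.1)
  calc ((2 + π) ^ (s + t) * h ^ s)⁻¹ = h ^ t / ((2 + π) * h) ^ (s + t) := by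
        rw [Real.mul_rpow (by positivity) hh.le, Real.rpow_add hh]
        field_simp
    _ ≤ (1 - ‖a‖ ^ 2) ^ t / ‖1 - (starRingEnd ℂ) a * w‖ ^ (s + t) := by
        gcongr
        · exact Real.rpow_nonneg (hh.le.trans hnum) t
        · exact norm_one_sub_conj_mul_le_of_mem_carlesonBox hh₁ hw

end

lemma mul_measure_le_setLIntegral_of_le {α : Type*} [MeasurableSpace α] {μ : Measure α}
    {S T : Set α} {f : α → ENNReal} {c : ENNReal} (hS : MeasurableSet S) (hST : S ⊆ T)
    (hf : ∀ x ∈ S, c ≤ f x) : c * μ S ≤ ∫⁻ x in T, f x ∂μ :=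
  calc c * μ S = ∫⁻ _ in S, c ∂μ := (setLIntegral_const S c).symm
    _ ≤ ∫⁻ x in S, f x ∂μ := setLIntegral_mono' hS hf
    _ ≤ ∫⁻ x in T, f x ∂μ := lintegral_mono_set hST

theorem stmt_14 (s t : ℝ) (hs : 0 < s) (ht : 0 < t) (μ : Measure ℂ)
    (M : ℝ)
    (hsup : ∀ a ∈ Metric.ball (0:ℂ) 1,
      (∫⁻ w in Metric.ball (0:ℂ) 1,
        ENNReal.ofReal ((1 - ‖a‖ ^ 2) ^ t /
          ‖1 - (starRingEnd ℂ) a * w‖ ^ (s + t)) ∂μ)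
        ≤ ENNReal.ofReal M) :
    ∃ C : ℝ, 0 < C ∧ ∀ θ h : ℝ, 0 < h → h ≤ 1 →
      μ (carlesonBox θ h) ≤ ENNReal.ofReal (C * h ^ s) := by
  set K : ℝ := (2 + π) ^ (s + t)
  refine ⟨max M 1 * K, by positivity, fun θ h hh hh₁ => ?_⟩
  set a : ℂ := ((1 - h : ℝ) : ℂ) * Complex.exp (θ * Complex.I)
  have ha : a ∈ Metric.ball (0:ℂ) 1 := by
    rw [mem_ball_zero_iff, norm_mul, Complex.norm_real, Real.norm_eq_abs,
      Complex.norm_exp_ofReal_mul_I, mul_one, abs_of_nonneg (by linarith)]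
    linarith
  have hKh : 0 < K * h ^ s := by positivity
  have hmass : (ENNReal.ofReal (K * h ^ s))⁻¹ * μ (carlesonBox θ h) ≤ ENNReal.ofReal M := by
    refine (mul_measure_le_setLIntegral_of_le (measurableSet_carlesonBox θ h)
      (carlesonBox_subset_ball θ h) fun w hw => ?_).trans (hsup a ha)
    rw [← ENNReal.ofReal_inv_of_pos hKh]
    exact ENNReal.ofReal_le_ofReal (inv_le_kernel_of_mem_carlesonBox hs ht hh hh₁ hw)
  rw [ENNReal.mul_le_iff_le_inv (ENNReal.inv_ne_zero.mpr ENNReal.ofReal_ne_top)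
    (ENNReal.inv_ne_top.mpr (ENNReal.ofReal_pos.mpr hKh).ne'), inv_inv,
    ← ENNReal.ofReal_mul hKh.le] at hmass
  refine hmass.trans (ENNReal.ofReal_le_ofReal ?_)
  calc K * h ^ s * M ≤ K * h ^ s * max M 1 := by gcongr; exact le_max_left M 1
    _ = max M 1 * K * h ^ s := by ring
end
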